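/- arXiv:2509.21863 — 4 statements merged into one kernel-verified Lean document; each statement's English description precedes it below -/
import Mathlib

section
/- Let $X$ be a Banach space and let $f_n : X \to \mathbb{R} \cup \{\infty\}$ be a sequence of lower semicontinuous proper convex functions. Define $f := \Gamma\text{-}\liminf_n f_n$ (the lower sequential $\Gamma$-limit with respect to the norm topology). Then for every $x^* \in X^*$, $f^*(x^*) \leq \Gamma(w^*)\text{-}\limsup_n f_n^*(x^*)$, where the right-hand side is the upper sequential $\Gamma$-limit of the Fenchel conjugates with respect to the weak-star topology. -/
open Filter Topology

noncomputable section

variable {X : Type*} [NormedAddCommGroup X] [NormedSpace ℝ X]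

/-- Fenchel conjugate of `f : X → EReal`, as a function on the dual. -/
def fconj (f : X → EReal) (p : X →L[ℝ] ℝ) : EReal :=
  ⨆ x : X, ((p x : ℝ) : EReal) - f x

/-- `f` is a proper convex lower semicontinuous function with values in `ℝ ∪ {∞}`. -/
def IsPLC (f : X → EReal) : Prop :=
  (∃ x, f x ≠ ⊤) ∧ (∀ x, f x ≠ ⊥) ∧
    Convex ℝ {q : X × ℝ | f q.1 ≤ (q.2 : EReal)} ∧ LowerSemicontinuous f

/-- Sequential Γ-liminf in the norm topology. -/
def gLiminf (f : ℕ → X → EReal) (x : X) : EReal :=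
  ⨅ (u : ℕ → X) (_ : Tendsto u atTop (𝓝 x)), liminf (fun n => f n (u n)) atTop

/-- Sequential Γ-limsup in the norm topology. -/
def gLimsup (f : ℕ → X → EReal) (x : X) : EReal :=
  ⨅ (u : ℕ → X) (_ : Tendsto u atTop (𝓝 x)), limsup (fun n => f n (u n)) atTop

/-- Weak-star convergence of a sequence of continuous linear functionals. -/
def WStarTendsto (u : ℕ → X →L[ℝ] ℝ) (p : X →L[ℝ] ℝ) : Prop :=
  ∀ x : X, Tendsto (fun n => u n x) atTop (𝓝 (p x))

/-- Sequential Γ-liminf in the weak-star topology of the dual. -/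
def gLiminfW (g : ℕ → (X →L[ℝ] ℝ) → EReal) (p : X →L[ℝ] ℝ) : EReal :=
  ⨅ (u : ℕ → X →L[ℝ] ℝ) (_ : WStarTendsto u p), liminf (fun n => g n (u n)) atTop

/-- Sequential Γ-limsup in the weak-star topology of the dual. -/
def gLimsupW (g : ℕ → (X →L[ℝ] ℝ) → EReal) (p : X →L[ℝ] ℝ) : EReal :=
  ⨅ (u : ℕ → X →L[ℝ] ℝ) (_ : WStarTendsto u p), limsup (fun n => g n (u n)) atTop

/-- Graph of the convex subdifferential. -/
def subdiff (f : X → EReal) : Set (X × (X →L[ℝ] ℝ)) :=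
  {q | f q.1 + fconj f q.2 = ((q.2 q.1 : ℝ) : EReal)}

/-- Graph of the Fenchel subdifferential of an arbitrary function. -/
def fenSubdiff (g : X → EReal) : Set (X × (X →L[ℝ] ℝ)) :=
  {q | g q.1 ≠ ⊤ ∧ ∀ u : X, ((q.2 u - q.2 q.1 : ℝ) : EReal) + g q.1 ≤ g u}

/-- Moreau envelope. -/
def moreau (f : X → EReal) (lam : ℝ) (x : X) : EReal :=
  ⨅ y : X, f y + ((1 / (2 * lam) * ‖x - y‖ ^ 2 : ℝ) : EReal)

/-!
The Fenchel–Young inequality suffices. If `u n → x` in norm and `v n → p` weak-star, then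
`v n` is bounded by Banach–Steinhaus, so `v n (u n) → p x`, and passing to the limit in
`v n (u n) - f n (u n) ≤ f n^* (v n)` gives `p x - liminf f n (u n) ≤ limsup f n^* (v n)`.
Taking the infimum over `u` and the supremum over `x` yields `f^* p ≤ limsup f n^* (v n)`.
-/

theorem EReal.coe_sub_le_comm (c : ℝ) (y z : EReal) : (c : EReal) - y ≤ z ↔ (c : EReal) - z ≤ y := by
  induction y <;> induction z <;> simp [EReal.sub_top, EReal.sub_bot, ← EReal.coe_sub]
  constructor <;> intro <;> linarith

theorem WStarTendsto.exists_norm_le [CompleteSpace X] {v : ℕ → X →L[ℝ] ℝ} {p : X →L[ℝ] ℝ}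
    (hv : WStarTendsto v p) : ∃ C, ∀ n, ‖v n‖ ≤ C :=
  banach_steinhaus fun z => by
    obtain ⟨C, hC⟩ := (hv z).norm.bddAbove_range
    exact ⟨C, fun n => hC ⟨n, rfl⟩⟩

theorem WStarTendsto.tendsto_apply [CompleteSpace X] {v : ℕ → X →L[ℝ] ℝ} {p : X →L[ℝ] ℝ}
    {u : ℕ → X} {x : X} (hv : WStarTendsto v p) (hu : Tendsto u atTop (𝓝 x)) :
    Tendsto (fun n => v n (u n)) atTop (𝓝 (p x)) := by
  obtain ⟨C, hC⟩ := hv.exists_norm_le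
  have hbound : ∀ n, ‖v n (u n) - v n x‖ ≤ C * ‖u n - x‖ := fun n => by
    rw [← map_sub]
    exact (v n).le_of_opNorm_le (hC n) _
  have hsmall : Tendsto (fun n => v n (u n) - v n x) atTop (𝓝 0) := by
    refine squeeze_zero_norm hbound ?_
    simpa using (tendsto_iff_norm_sub_tendsto_zero.1 hu).const_mul C
  simpa using hsmall.add (hv x)

theorem coe_sub_liminf_le_limsup_fconj (f : ℕ → X → EReal) {u : ℕ → X}
    {v : ℕ → X →L[ℝ] ℝ} {c : ℝ} (h : Tendsto (fun n => v n (u n)) atTop (𝓝 c)) :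
    (c : EReal) - liminf (fun n => f n (u n)) atTop ≤ limsup (fun n => fconj (f n) (v n)) atTop := by
  have hE : Tendsto (fun n => (v n (u n) : EReal)) atTop (𝓝 c) :=
    (continuous_coe_real_ereal.tendsto c).comp h
  calc (c : EReal) - liminf (fun n => f n (u n)) atTop
      = limsup (fun n => -f n (u n)) atTop + liminf (fun n => (v n (u n) : EReal)) atTop := by
        rw [hE.liminf_eq, sub_eq_add_neg, add_comm, ← EReal.limsup_neg]
        rfl
    _ ≤ limsup (fun n => -f n (u n) + (v n (u n) : EReal)) atTop := EReal.le_limsup_add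
    _ ≤ limsup (fun n => fconj (f n) (v n)) atTop := by
        refine limsup_le_limsup (Eventually.of_forall fun n => ?_)
        show -f n (u n) + _ ≤ _
        rw [add_comm, ← sub_eq_add_neg]
        exact le_iSup (fun z => (v n z : EReal) - f n z) (u n)

theorem stmt1_general {X : Type*} [NormedAddCommGroup X] [NormedSpace ℝ X] [CompleteSpace X]
    (f : ℕ → X → EReal) :
    ∀ p : X →L[ℝ] ℝ,
      fconj (fun x => gLiminf f x) p ≤ gLimsupW (fun n => fconj (f n)) p := by
  intro p
  refine iSup_le fun x => le_iInf₂ fun v hv => ?_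
  rw [EReal.coe_sub_le_comm]
  refine le_iInf₂ fun u hu => ?_
  rw [← EReal.coe_sub_le_comm]
  exact coe_sub_liminf_le_limsup_fconj f (hv.tendsto_apply hu)

/-- The conjugate of the Γ-liminf is dominated by the weak-star Γ-limsup of the
conjugates. -/
theorem stmt1 {X : Type*} [NormedAddCommGroup X] [NormedSpace ℝ X] [CompleteSpace X]
    (f : ℕ → X → EReal) (hf : ∀ n, IsPLC (f n)) :
    ∀ p : X →L[ℝ] ℝ,
      fconj (fun x => gLiminf f x) p ≤ gLimsupW (fun n => fconj (f n)) p :=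
  stmt1_general f
end
end

section
/- Let $X$ be a Banach space, $f_n : X \to \mathbb{R}\cup\{\infty\}$ a sequence of lower semicontinuous proper convex functions, $f := \Gamma\text{-}\liminf_n f_n$ (norm topology), $B \subseteq X$ a nonempty convex norm-compact set, and $\lambda > 0$. Then for every $x^* \in X^*$, $(f + \delta_B + \tfrac{\lambda}{2}\|\cdot\|^2)^*(x^*) \geq \limsup_n (f_n + \delta_B + \tfrac{\lambda}{2}\|\cdot\|^2)^*(x^*)$. -/
open Filter Topology

noncomputable section

variable {X : Type*} [NormedAddCommGroup X] [NormedSpace ℝ X]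

attribute [local instance] Classical.propDecidable

/-- Claim 1 in the proof of the main duality theorem: perturbed conjugates over a
compact convex set. -/
theorem stmt2 {X : Type*} [NormedAddCommGroup X] [NormedSpace ℝ X] [CompleteSpace X]
    (f : ℕ → X → EReal) (hf : ∀ n, IsPLC (f n))
    (B : Set X) (hBne : B.Nonempty) (hBconv : Convex ℝ B) (hBcpt : IsCompact B)
    (lam : ℝ) (hlam : 0 < lam) :
    ∀ p : X →L[ℝ] ℝ,
      limsup (fun n => fconj
          (fun x => f n x + (if x ∈ B then (0 : EReal) else ⊤) +
            ((lam / 2 * ‖x‖ ^ 2 : ℝ) : EReal)) p) atTop ≤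
        fconj (fun x => gLiminf f x + (if x ∈ B then (0 : EReal) else ⊤) +
            ((lam / 2 * ‖x‖ ^ 2 : ℝ) : EReal)) p := by
  intro p
  set q : X → ℝ := fun x => lam / 2 * ‖x‖ ^ 2 with hq
  by_contra hcon
  push_neg at hcon
  obtain ⟨c, hc1, hc2⟩ := EReal.exists_between_coe_real hcon
  -- extract subsequence with fconj > c
  have hfreq : ∃ᶠ n in atTop, (c : EReal) < fconj
      (fun x => f n x + (if x ∈ B then (0 : EReal) else ⊤) + ((q x : ℝ) : EReal)) p :=
    frequently_lt_of_lt_limsup (by isBoundedDefault) hc2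
  obtain ⟨φ, hφmono, hφ⟩ := extraction_of_frequently_atTop hfreq
  -- pick near-maximisers
  have hx : ∀ k, ∃ x, (c : EReal) <
      ((p x : ℝ) : EReal) - (f (φ k) x + (if x ∈ B then (0 : EReal) else ⊤) + ((q x : ℝ) : EReal)) :=
    fun k => lt_iSup_iff.mp (hφ k)
  choose v hv using hx
  have hvB : ∀ k, v k ∈ B := by
    intro k
    by_contra hvk
    have h1 : f (φ k) (v k) + (if v k ∈ B then (0 : EReal) else ⊤) + ((q (v k) : ℝ) : EReal) = ⊤ := by
      rw [if_neg hvk, EReal.add_top_of_ne_bot ((hf (φ k)).2.1 (v k)),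
        EReal.top_add_of_ne_bot (EReal.coe_ne_bot _)]
    have := hv k
    rw [h1] at this
    simp only [EReal.sub_top] at this
    exact absurd this (not_lt_bot)
  -- compactness
  obtain ⟨x, hxB, ψ, hψmono, hψ⟩ := hBcpt.tendsto_subseq hvB
  -- for each j, f value is real and bounded
  have key : ∀ j, f (φ (ψ j)) (v (ψ j)) ≤ ((p (v (ψ j)) - q (v (ψ j)) - c : ℝ) : EReal) := by
    intro j
    have h0 := hv (ψ j)
    rw [if_pos (hvB (ψ j)), add_zero] at h0
    -- f value ≠ ⊤
    have hne : f (φ (ψ j)) (v (ψ j)) ≠ ⊤ := by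
      intro htop
      rw [htop, EReal.top_add_of_ne_bot (EReal.coe_ne_bot _), EReal.sub_top] at h0
      exact absurd h0 not_lt_bot
    obtain ⟨r, hr⟩ : ∃ r : ℝ, f (φ (ψ j)) (v (ψ j)) = (r : EReal) :=
      ⟨(f (φ (ψ j)) (v (ψ j))).toReal, (EReal.coe_toReal hne ((hf _).2.1 _)).symm⟩
    rw [hr] at h0 ⊢
    rw [← EReal.coe_add, ← EReal.coe_sub, EReal.coe_lt_coe_iff] at h0
    exact_mod_cast EReal.coe_le_coe_iff.mpr (by linarith)
  -- the extended sequence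
  set σ : ℕ → ℕ := fun j => φ (ψ j) with hσdef
  have hσmono : StrictMono σ := hφmono.comp hψmono
  set u : ℕ → X := fun n => if h : ∃ j, σ j = n then v (ψ h.choose) else x with hu
  have huσ : ∀ j, u (σ j) = v (ψ j) := by
    intro j
    have h : ∃ j', σ j' = σ j := ⟨j, rfl⟩
    have : h.choose = j := hσmono.injective h.choose_spec
    simp only [hu, dif_pos h, this]
  have hutend : Tendsto u atTop (𝓝 x) := by
    rw [Metric.tendsto_atTop] at hψ ⊢
    intro ε hε
    obtain ⟨J, hJ⟩ := hψ ε hε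
    refine ⟨σ J, fun n hn => ?_⟩
    by_cases h : ∃ j, σ j = n
    · have hj := h.choose_spec
      have : J ≤ h.choose := by
        by_contra hlt
        push_neg at hlt
        exact absurd (hj ▸ hσmono hlt) (not_lt.mpr hn)
      simp only [hu, dif_pos h]
      exact hJ _ this
    · simp only [hu, dif_neg h]
      simpa using hε
  -- gLiminf bound
  have hg1 : gLiminf f x ≤ liminf (fun n => f n (u n)) atTop :=
    iInf₂_le u hutend
  have hg2 : liminf (fun n => f n (u n)) atTop ≤
      liminf (fun j => f (σ j) (v (ψ j))) atTop := by
    have : (fun j => f (σ j) (v (ψ j))) = (fun n => f n (u n)) ∘ σ := by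
      funext j; simp [Function.comp, huσ j]
    rw [this, liminf_comp]
    exact liminf_le_liminf_of_le (map_le_iff_le_comap.mpr hσmono.tendsto_atTop.le_comap)
  have hg3 : liminf (fun j => f (σ j) (v (ψ j))) atTop ≤
      liminf (fun j => ((p (v (ψ j)) - q (v (ψ j)) - c : ℝ) : EReal)) atTop :=
    liminf_le_liminf (Eventually.of_forall key)
  have hqc : Continuous q := by continuity
  have hreal : Tendsto (fun j => p (v (ψ j)) - q (v (ψ j)) - c) atTop (𝓝 (p x - q x - c)) := by
    have h1 : Tendsto (fun j => p (v (ψ j))) atTop (𝓝 (p x)) := (p.continuous.tendsto x).comp hψ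
    have h2 : Tendsto (fun j => q (v (ψ j))) atTop (𝓝 (q x)) := (hqc.tendsto x).comp hψ
    exact (h1.sub h2).sub tendsto_const_nhds
  have hcont : Tendsto (fun j => ((p (v (ψ j)) - q (v (ψ j)) - c : ℝ) : EReal)) atTop
      (𝓝 ((p x - q x - c : ℝ) : EReal)) :=
    (continuous_coe_real_ereal.tendsto _).comp hreal
  have hg4 : liminf (fun j => ((p (v (ψ j)) - q (v (ψ j)) - c : ℝ) : EReal)) atTop
      = ((p x - q x - c : ℝ) : EReal) := hcont.liminf_eq
  have hgfin : gLiminf f x ≤ ((p x - q x - c : ℝ) : EReal) :=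
    hg1.trans (hg2.trans (hg3.trans_eq hg4))
  -- conclude
  have hG : gLiminf f x + (if x ∈ B then (0 : EReal) else ⊤) + ((q x : ℝ) : EReal)
      ≤ ((p x - c : ℝ) : EReal) := by
    rw [if_pos hxB, add_zero]
    calc gLiminf f x + ((q x : ℝ) : EReal) ≤ ((p x - q x - c : ℝ) : EReal) + ((q x : ℝ) : EReal) :=
          add_le_add hgfin le_rfl
      _ = ((p x - c : ℝ) : EReal) := by rw [← EReal.coe_add]; ring_nf
  have hfinal : (c : EReal) ≤ fconj
      (fun x => gLiminf f x + (if x ∈ B then (0 : EReal) else ⊤) + ((q x : ℝ) : EReal)) p := by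
    have h1 : ((p x : ℝ) : EReal) - ((p x - c : ℝ) : EReal) ≤
        ((p x : ℝ) : EReal) - (gLiminf f x + (if x ∈ B then (0 : EReal) else ⊤) + ((q x : ℝ) : EReal)) :=
      EReal.sub_le_sub le_rfl hG
    have h2 : ((p x : ℝ) : EReal) - ((p x - c : ℝ) : EReal) = (c : EReal) := by
      rw [← EReal.coe_sub]; norm_num
    exact (h2 ▸ h1).trans (le_iSup (fun y => ((p y : ℝ) : EReal) -
      (gLiminf f y + (if y ∈ B then (0 : EReal) else ⊤) + ((q y : ℝ) : EReal))) x)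
  exact absurd (hfinal.trans_lt hc1) (lt_irrefl _)
end
end

section
/- In $X = \ell_\infty(\mathbb{N})$, identify $\ell_1(\mathbb{N}) \subseteq X^* = (\ell_1)^{**}$ via the canonical embedding, and let $C_k := \{(x_i) \in \ell_1 : x_j = 0 \text{ for } j \geq k, \sum_j |x_j| \leq 1\}$. Then the weak-star closure of $\bigcup_{k} C_k$ in $X^*$ equals the closed unit ball of $X^*$, but the sequential weak-star upper limit $\mathrm{Ls}_{w^*} C_k$ is strictly contained in the closed unit ball of $X^*$. -/
open Filter Topology

noncomputable section

variable {X : Type*} [NormedAddCommGroup X] [NormedSpace ℝ X]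

/-- The weak-star closure of a set of functionals, described via the canonical
neighborhood basis of the weak-star topology. -/
def wstarClosure {X : Type*} [NormedAddCommGroup X] [NormedSpace ℝ X]
    (S : Set (X →L[ℝ] ℝ)) : Set (X →L[ℝ] ℝ) :=
  {φ | ∀ (F : Finset X) (ε : ℝ), 0 < ε → ∃ ψ ∈ S, ∀ b ∈ F, |φ b - ψ b| < ε}

/-- Sequential weak-star upper limit of a sequence of sets of functionals. -/
def LsWstar {X : Type*} [NormedAddCommGroup X] [NormedSpace ℝ X]
    (C : ℕ → Set (X →L[ℝ] ℝ)) : Set (X →L[ℝ] ℝ) :=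
  {φ | ∃ j : ℕ → ℕ, StrictMono j ∧ ∃ y : ℕ → X →L[ℝ] ℝ,
    (∀ n, y n ∈ C (j n)) ∧ WStarTendsto y φ}

/-- `ℓ∞(ℕ)`. -/
abbrev Linf : Type := lp (fun _ : ℕ => ℝ) ⊤

/-- The sets `C_k ⊆ (ℓ∞)^*`: finitely supported elements of the unit ball of `ℓ¹`,
supported on `{0, …, k-1}`, viewed as functionals on `ℓ∞`. -/
def Cball (k : ℕ) : Set (Linf →L[ℝ] ℝ) :=
  {φ | ∃ a : ℕ → ℝ, (∀ j, k ≤ j → a j = 0) ∧ (∑ j ∈ Finset.range k, |a j|) ≤ 1 ∧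
    ∀ b : Linf, φ b = ∑ j ∈ Finset.range k, a j * b j}


section Aux

lemma coord_abs_le (b : Linf) (j : ℕ) : |b j| ≤ ‖b‖ := by
  have h := lp.norm_apply_le_norm ENNReal.top_ne_zero b j
  rwa [Real.norm_eq_abs] at h

lemma Cball_apply_le {k : ℕ} {ψ : Linf →L[ℝ] ℝ} (h : ψ ∈ Cball k) (b : Linf) :
    |ψ b| ≤ ‖b‖ := by
  obtain ⟨a, -, hsum, happ⟩ := h
  rw [happ b]
  calc |∑ j ∈ Finset.range k, a j * b j| ≤ ∑ j ∈ Finset.range k, |a j * b j| :=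
        Finset.abs_sum_le_sum_abs _ _
    _ ≤ ∑ j ∈ Finset.range k, |a j| * ‖b‖ := by
        refine Finset.sum_le_sum fun j _ => ?_
        rw [abs_mul]
        exact mul_le_mul_of_nonneg_left (coord_abs_le b j) (abs_nonneg _)
    _ = (∑ j ∈ Finset.range k, |a j|) * ‖b‖ := by rw [Finset.sum_mul]
    _ ≤ 1 * ‖b‖ := mul_le_mul_of_nonneg_right hsum (norm_nonneg _)
    _ = ‖b‖ := one_mul _

lemma Cball_mono : Monotone Cball := by
  intro k l hkl φ ⟨a, hsupp, hsum, happ⟩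
  refine ⟨a, fun j hj => hsupp j (hkl.trans hj), ?_, fun b => ?_⟩
  · calc ∑ j ∈ Finset.range l, |a j| = ∑ j ∈ Finset.range k, |a j| := by
          refine (Finset.sum_subset (Finset.range_subset_range.2 hkl) ?_).symm
          intro j _ hj
          rw [hsupp j (by simpa using hj), abs_zero]
      _ ≤ 1 := hsum
  · rw [happ b]
    refine Finset.sum_subset (Finset.range_subset_range.2 hkl) ?_
    intro j _ hj
    rw [hsupp j (by simpa using hj), zero_mul]

lemma convex_iUnion_Cball : Convex ℝ (⋃ k, Cball k) := by
  intro x hx y hy s t hs ht hst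
  obtain ⟨_, ⟨k1, rfl⟩, hx⟩ := hx
  obtain ⟨_, ⟨k2, rfl⟩, hy⟩ := hy
  have hx' := Cball_mono (le_max_left k1 k2) hx
  have hy' := Cball_mono (le_max_right k1 k2) hy
  set K := max k1 k2
  obtain ⟨a1, hs1, hsum1, happ1⟩ := hx'
  obtain ⟨a2, hs2, hsum2, happ2⟩ := hy'
  refine Set.mem_iUnion.2 ⟨K, s • a1 + t • a2, fun j hj => by
      simp [hs1 j hj, hs2 j hj], ?_, fun b => ?_⟩
  · calc ∑ j ∈ Finset.range K, |s * a1 j + t * a2 j|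
        ≤ ∑ j ∈ Finset.range K, (s * |a1 j| + t * |a2 j|) := by
          refine Finset.sum_le_sum fun j _ => ?_
          calc |s * a1 j + t * a2 j| ≤ |s * a1 j| + |t * a2 j| := abs_add_le _ _
            _ = s * |a1 j| + t * |a2 j| := by
                rw [abs_mul, abs_mul, abs_of_nonneg hs, abs_of_nonneg ht]
      _ = s * (∑ j ∈ Finset.range K, |a1 j|) + t * (∑ j ∈ Finset.range K, |a2 j|) := by
          rw [Finset.sum_add_distrib, Finset.mul_sum, Finset.mul_sum]
      _ ≤ s * 1 + t * 1 := by
          gcongr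
      _ = 1 := by rw [mul_one, mul_one, hst]
  · simp only [ContinuousLinearMap.add_apply, ContinuousLinearMap.coe_smul',
      Pi.smul_apply, smul_eq_mul, happ1 b, happ2 b, Pi.add_apply]
    rw [Finset.mul_sum, Finset.mul_sum, ← Finset.sum_add_distrib]
    refine Finset.sum_congr rfl fun j _ => by ring


noncomputable def coordL (i : ℕ) : Linf →L[ℝ] ℝ :=
  LinearMap.mkContinuous
    { toFun := fun b => b i
      map_add' := fun b c => by simp
      map_smul' := fun r b => by simp }
    1 (fun b => by
      rw [one_mul]
      exact lp.norm_apply_le_norm ENNReal.top_ne_zero b i)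

@[simp] lemma coordL_apply (i : ℕ) (b : Linf) : coordL i b = b i := rfl

noncomputable def finFunc (k : ℕ) (a : ℕ → ℝ) : Linf →L[ℝ] ℝ :=
  ∑ j ∈ Finset.range k, a j • coordL j

lemma finFunc_apply (k : ℕ) (a : ℕ → ℝ) (b : Linf) :
    finFunc k a b = ∑ j ∈ Finset.range k, a j * b j := by
  simp [finFunc]

lemma single_mem_Cball (i : ℕ) (s : ℝ) (hs : |s| ≤ 1) :
    finFunc (i + 1) (Pi.single i s) ∈ Cball (i + 1) := by
  classical
  refine ⟨Pi.single i s, fun j hj => Pi.single_eq_of_ne (by omega) _, ?_,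
    fun b => finFunc_apply _ _ b⟩
  rw [Finset.sum_eq_single i (fun j _ hj => by rw [Pi.single_eq_of_ne hj, abs_zero])
    (fun h => absurd (Finset.self_mem_range_succ i) h)]
  rwa [Pi.single_eq_same]

lemma finFunc_single_apply (i : ℕ) (s : ℝ) (b : Linf) :
    finFunc (i + 1) (Pi.single i s) b = s * b i := by
  classical
  rw [finFunc_apply, Finset.sum_eq_single i
    (fun j _ hj => by rw [Pi.single_eq_of_ne hj, zero_mul])
    (fun h => absurd (Finset.self_mem_range_succ i) h), Pi.single_eq_same]

lemma exists_near_Cball (φ : Linf →L[ℝ] ℝ) (hφ : ‖φ‖ ≤ 1) (δ : ℝ) (hδ : 0 < δ)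
    (w : Linf) : ∃ ψ ∈ ⋃ k, Cball k, ‖w‖ - δ < ψ w := by
  classical
  obtain ⟨v, ⟨i, rfl⟩, hv1, -⟩ := (lp.isLUB_norm w).exists_between
    (by linarith : ‖w‖ - δ < ‖w‖)
  set s : ℝ := if w i < 0 then -1 else 1 with hs
  refine ⟨finFunc (i + 1) (Pi.single i s), Set.mem_iUnion.2 ⟨i + 1,
    single_mem_Cball i s (by rw [hs]; split <;> norm_num)⟩, ?_⟩
  rw [finFunc_single_apply]
  have : s * w i = |w i| := by
    rw [hs]; rcases lt_or_ge (w i) 0 with h | h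
    · rw [if_pos h, abs_of_neg h]; ring
    · rw [if_neg (not_lt.2 h), abs_of_nonneg h, one_mul]
  rw [this]
  simp only [Real.norm_eq_abs] at hv1
  exact hv1

lemma goldstine (φ : Linf →L[ℝ] ℝ) (hφ : ‖φ‖ ≤ 1)
    (convU : Convex ℝ (⋃ k, Cball k))
    (F : Finset Linf) (ε : ℝ) (hε : 0 < ε) :
    ∃ ψ ∈ ⋃ k, Cball k, ∀ b ∈ F, |φ b - ψ b| < ε := by
  classical
  set T : (Linf →L[ℝ] ℝ) →ₗ[ℝ] (↥F → ℝ) :=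
    { toFun := fun ψ => fun b => ψ (b : Linf)
      map_add' := fun ψ₁ ψ₂ => rfl
      map_smul' := fun r ψ => rfl } with hT
  set S : Set (↥F → ℝ) := T '' (⋃ k, Cball k) with hS
  have key : T φ ∈ closure S := by
    by_contra hcon
    obtain ⟨g, u, hgs, hgφ⟩ := geometric_hahn_banach_closed_point
      (convU.linear_image T).closure isClosed_closure hcon
    set c : ↥F → ℝ := fun b => g (Pi.single b 1) with hc
    have hg_repr : ∀ x : ↥F → ℝ, g x = ∑ b, x b * c b := by
      intro x
      conv_lhs => rw [pi_eq_sum_univ x, map_sum]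
      refine Finset.sum_congr rfl fun b _ => ?_
      rw [map_smul, smul_eq_mul, hc]
      congr 2
      funext j
      simp [Pi.single_apply, eq_comm]
    set w : Linf := ∑ b : ↥F, c b • (b : Linf) with hw
    have hTw : ∀ ψ : Linf →L[ℝ] ℝ, g (T ψ) = ψ w := by
      intro ψ
      rw [hg_repr, hw, map_sum]
      refine Finset.sum_congr rfl fun b _ => ?_
      rw [map_smul, smul_eq_mul, hT]
      simp [mul_comm]
    have h1 : φ w ≤ ‖w‖ := by
      calc φ w ≤ |φ w| := le_abs_self _
        _ ≤ ‖φ‖ * ‖w‖ := by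
            have := φ.le_opNorm w
            rwa [Real.norm_eq_abs] at this
        _ ≤ 1 * ‖w‖ := mul_le_mul_of_nonneg_right hφ (norm_nonneg _)
        _ = ‖w‖ := one_mul _
    have h2 : ‖w‖ ≤ u := by
      refine le_of_forall_pos_lt_add fun δ hδ => ?_
      obtain ⟨ψ, hψ, hψw⟩ := exists_near_Cball φ hφ δ hδ w
      have := hgs (T ψ) (subset_closure (Set.mem_image_of_mem T hψ))
      rw [hTw] at this
      linarith
    rw [hTw] at hgφ
    linarith
  obtain ⟨y, hy, hdy⟩ := Metric.mem_closure_iff.1 key ε hε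
  obtain ⟨ψ, hψ, rfl⟩ := hy
  refine ⟨ψ, hψ, fun b hb => ?_⟩
  have := dist_le_pi_dist (T φ) (T ψ) ⟨b, hb⟩
  rw [Real.dist_eq] at this
  calc |φ b - ψ b| ≤ dist (T φ) (T ψ) := this
    _ < ε := hdy



/-- The subspace of eventually constant sequences. -/
noncomputable def Vsub : Submodule ℝ Linf where
  carrier := {x | ∃ t : ℝ, ∀ᶠ n in atTop, (x : ℕ → ℝ) n = t}
  add_mem' := by
    rintro x y ⟨t, ht⟩ ⟨s, hs⟩
    refine ⟨t + s, ?_⟩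
    filter_upwards [ht, hs] with n h1 h2
    rw [lp.coeFn_add, Pi.add_apply, h1, h2]
  zero_mem' := ⟨0, Eventually.of_forall fun n => by rw [lp.coeFn_zero, Pi.zero_apply]⟩
  smul_mem' := by
    rintro r x ⟨t, ht⟩
    refine ⟨r * t, ?_⟩
    filter_upwards [ht] with n h1
    rw [lp.coeFn_smul, Pi.smul_apply, h1, smul_eq_mul]

lemma ev_unique {x : ℕ → ℝ} {t s : ℝ} (h1 : ∀ᶠ n in atTop, x n = t)
    (h2 : ∀ᶠ n in atTop, x n = s) : t = s := by
  obtain ⟨n, hn1, hn2⟩ := (h1.and h2).exists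
  rw [← hn1, hn2]

noncomputable def evLim (x : Vsub) : ℝ := x.2.choose

lemma evLim_spec (x : Vsub) : ∀ᶠ n in atTop, ((x : Linf) : ℕ → ℝ) n = evLim x :=
  x.2.choose_spec

lemma evLim_eq (x : Vsub) {t : ℝ} (h : ∀ᶠ n in atTop, ((x : Linf) : ℕ → ℝ) n = t) :
    evLim x = t := ev_unique (evLim_spec x) h

noncomputable def fV : Vsub →L[ℝ] ℝ :=
  LinearMap.mkContinuous
    { toFun := evLim
      map_add' := fun x y => by
        refine evLim_eq _ ?_
        filter_upwards [evLim_spec x, evLim_spec y] with n h1 h2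
        rw [Submodule.coe_add, lp.coeFn_add, Pi.add_apply, h1, h2]
      map_smul' := fun r x => by
        refine evLim_eq _ ?_
        filter_upwards [evLim_spec x] with n h1
        rw [Submodule.coe_smul, lp.coeFn_smul, Pi.smul_apply, h1]
        rfl }
    1 (fun x => by
      rw [one_mul]
      obtain ⟨n, hn⟩ := (evLim_spec x).exists
      have h2 : |evLim x| ≤ ‖(x : Linf)‖ := hn ▸ coord_abs_le (x : Linf) n
      rw [show ‖x‖ = ‖(x : Linf)‖ from (Submodule.norm_coe x).symm]
      exact h2)

lemma fV_apply (x : Vsub) : fV x = evLim x := rfl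

lemma fV_norm : ‖fV‖ ≤ 1 := LinearMap.mkContinuous_norm_le _ zero_le_one _

/-- constant one sequence -/
noncomputable def oneL : Linf :=
  ⟨fun _ => (1 : ℝ), memℓp_infty ⟨1, by rintro v ⟨n, rfl⟩; simp⟩⟩

@[simp] lemma oneL_apply (n : ℕ) : (oneL : ℕ → ℝ) n = 1 := rfl

lemma oneL_mem : oneL ∈ Vsub := ⟨1, Eventually.of_forall fun n => rfl⟩

/-- basis vectors -/
noncomputable def eL (i : ℕ) : Linf :=
  ⟨Pi.single i 1, memℓp_infty ⟨1, by
    rintro v ⟨n, rfl⟩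
    simp only [Real.norm_eq_abs]
    rcases eq_or_ne n i with rfl | h
    · rw [Pi.single_eq_same]; norm_num
    · rw [Pi.single_eq_of_ne h]; norm_num⟩⟩

@[simp] lemma eL_apply (i : ℕ) : ((eL i : Linf) : ℕ → ℝ) = Pi.single i (1:ℝ) := rfl

lemma eL_mem (i : ℕ) : eL i ∈ Vsub :=
  ⟨0, eventually_atTop.2 ⟨i + 1, fun n hn => Pi.single_eq_of_ne (by omega) _⟩⟩

lemma exists_phi : ∃ φ : Linf →L[ℝ] ℝ, ‖φ‖ ≤ 1 ∧ φ oneL = 1 ∧ ∀ i, φ (eL i) = 0 := by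
  obtain ⟨φ, hext, hnorm⟩ := exists_extension_norm_eq Vsub fV
  refine ⟨φ, hnorm ▸ fV_norm, ?_, fun i => ?_⟩
  · have h := hext ⟨oneL, oneL_mem⟩
    rw [h, fV_apply, evLim_eq _ (t := 1) (Eventually.of_forall fun n => rfl)]
  · have h := hext ⟨eL i, eL_mem i⟩
    rw [h, fV_apply, evLim_eq _ (eventually_atTop.2 ⟨i + 1, fun n hn =>
      Pi.single_eq_of_ne (by omega) _⟩)]


lemma phi_not_mem (φ : Linf →L[ℝ] ℝ) (h1 : φ oneL = 1) (h0 : ∀ i, φ (eL i) = 0) :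
    φ ∉ LsWstar Cball := by
  classical
  rintro ⟨j, hj, y, hyC, hyw⟩
  choose a hsupp hsum happ using hyC
  have eLc : ∀ i u : ℕ, ((eL i : Linf) : ℕ → ℝ) u = (Pi.single i (1:ℝ) : ℕ → ℝ) u :=
    fun i u => congrFun (eL_apply i) u
  have key : ∀ i n, y n (eL i) = a n i := by
    intro i n
    rw [happ]
    by_cases hi : i < j n
    · rw [Finset.sum_eq_single i (fun u _ hu => by
        rw [eLc, Pi.single_eq_of_ne hu, mul_zero])
        (fun h => absurd (Finset.mem_range.2 hi) h), eLc, Pi.single_eq_same, mul_one]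
    · rw [Finset.sum_eq_zero (fun u hu => by
        rw [eLc, Pi.single_eq_of_ne (by rw [Finset.mem_range] at hu; omega), mul_zero]),
        hsupp n i (by omega)]
  have hcoord : ∀ i, Tendsto (fun n => a n i) atTop (𝓝 0) := by
    intro i
    have h := hyw (eL i)
    rw [h0 i] at h
    exact h.congr (fun n => key i n)
  have htotal : Tendsto (fun n => ∑ i ∈ Finset.range (j n), a n i) atTop (𝓝 1) := by
    have h := hyw oneL
    rw [h1] at h
    refine h.congr (fun n => ?_)
    rw [happ]
    exact Finset.sum_congr rfl fun u _ => by rw [oneL_apply, mul_one]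
  have hhead : ∀ N, Tendsto (fun n => ∑ i ∈ Finset.range N, |a n i|) atTop (𝓝 0) := by
    intro N
    have h : Tendsto (fun n => ∑ i ∈ Finset.range N, |a n i|) atTop
        (𝓝 (∑ _i ∈ Finset.range N, (0:ℝ))) :=
      tendsto_finset_sum _ (fun i _ => by simpa using (hcoord i).abs)
    simpa using h
  have exists_next : ∀ p M : ℕ, ∃ m, p < m ∧ (∑ i ∈ Finset.range M, |a m i|) < 1/8 ∧
      7/8 < ∑ i ∈ Finset.range (j m), a m i := by
    intro p M
    have e1 : ∀ᶠ m in atTop, (∑ i ∈ Finset.range M, |a m i|) < 1/8 :=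
      (hhead M).eventually_lt_const (by norm_num)
    have e2 : ∀ᶠ m in atTop, 7/8 < ∑ i ∈ Finset.range (j m), a m i :=
      htotal.eventually_const_lt (by norm_num)
    obtain ⟨mm, h1, h2, h3⟩ := ((eventually_gt_atTop p).and (e1.and e2)).exists
    exact ⟨mm, h1, h2, h3⟩
  let nk : ℕ → ℕ := fun k => Nat.rec (exists_next 0 0).choose
      (fun _ prev => (exists_next prev (j prev)).choose) k
  have hnkS : ∀ k, nk k < nk (k+1) ∧
      (∑ i ∈ Finset.range (j (nk k)), |a (nk (k+1)) i|) < 1/8 ∧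
      7/8 < ∑ i ∈ Finset.range (j (nk (k+1))), a (nk (k+1)) i :=
    fun k => (exists_next (nk k) (j (nk k))).choose_spec
  have hmono : StrictMono nk := strictMono_nat_of_lt_succ (fun k => (hnkS k).1)
  set m : ℕ → ℕ := fun k => j (nk k) with hm
  have hmmono : StrictMono m := fun k l h => hj (hmono h)
  have hex : ∀ i : ℕ, ∃ k, i < m k :=
    fun i => ⟨i + 1, lt_of_lt_of_le (Nat.lt_succ_self i) (hmmono.le_apply)⟩
  set b : ℕ → ℝ := fun i => if Even (Nat.find (hex i)) then 1 else 0 with hb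
  have hb01 : ∀ i, b i = 0 ∨ b i = 1 := fun i => by
    rw [hb]; dsimp only; split
    · exact Or.inr rfl
    · exact Or.inl rfl
  have hbabs : ∀ i, |b i| ≤ 1 := fun i => by
    rcases hb01 i with h | h <;> rw [h] <;> norm_num
  set bL : Linf := ⟨b, memℓp_infty ⟨1, by
    rintro v ⟨i, rfl⟩
    dsimp only
    rw [Real.norm_eq_abs]
    exact hbabs i⟩⟩ with hbL
  have hbLc : ∀ i, (bL : ℕ → ℝ) i = b i := fun i => rfl
  have hfind : ∀ k i, m k ≤ i → i < m (k+1) → Nat.find (hex i) = k + 1 := by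
    intro k i hi1 hi2
    rw [Nat.find_eq_iff]
    exact ⟨hi2, fun l hl => not_lt.2 (le_trans (hmmono.monotone (by omega)) hi1)⟩
  have hbval : ∀ k i, m k ≤ i → i < m (k+1) →
      b i = if Even (k+1) then (1:ℝ) else 0 := by
    intro k i hi1 hi2
    rw [hb]
    dsimp only
    rw [hfind k i hi1 hi2]
  have hesti : ∀ k, (Even (k+1) → 5/8 ≤ y (nk (k+1)) bL) ∧
      (¬ Even (k+1) → y (nk (k+1)) bL < 1/8) := by
    intro k
    set q := nk (k+1) with hq
    have hmle : m k ≤ m (k+1) := le_of_lt (hmmono (Nat.lt_succ_self k))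
    have happb : y q bL = ∑ i ∈ Finset.range (m k), a q i * b i
        + ∑ i ∈ Finset.Ico (m k) (m (k+1)), a q i * b i := by
      rw [happ, ← Finset.sum_range_add_sum_Ico _ hmle]
    have hhead1 : |∑ i ∈ Finset.range (m k), a q i * b i|
        ≤ ∑ i ∈ Finset.range (m k), |a q i| := by
      refine (Finset.abs_sum_le_sum_abs _ _).trans (Finset.sum_le_sum fun i _ => ?_)
      rw [abs_mul]
      calc |a q i| * |b i| ≤ |a q i| * 1 :=
            mul_le_mul_of_nonneg_left (hbabs i) (abs_nonneg _)
        _ = |a q i| := mul_one _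
    have hheadsmall : ∑ i ∈ Finset.range (m k), |a q i| < 1/8 := (hnkS k).2.1
    have hheadsigned : |∑ i ∈ Finset.range (m k), a q i| < 1/8 :=
      lt_of_le_of_lt (Finset.abs_sum_le_sum_abs _ _) hheadsmall
    have htot : 7/8 < ∑ i ∈ Finset.range (m (k+1)), a q i := (hnkS k).2.2
    have hIco : 3/4 < ∑ i ∈ Finset.Ico (m k) (m (k+1)), a q i := by
      have hsp := Finset.sum_range_add_sum_Ico (fun i => a q i) hmle
      have h8 := abs_le.1 hheadsigned.le
      have h8a := h8.1
      have h8b := h8.2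
      linarith
    constructor
    · intro hev
      have hbone : ∀ i ∈ Finset.Ico (m k) (m (k+1)), a q i * b i = a q i := by
        intro i hi
        obtain ⟨hi1, hi2⟩ := Finset.mem_Ico.1 hi
        rw [hbval k i hi1 hi2, if_pos hev, mul_one]
      rw [happb, Finset.sum_congr rfl hbone]
      have hh := (abs_lt.1 (lt_of_le_of_lt hhead1 hheadsmall)).1
      linarith
    · intro hodd
      have hbzero : ∀ i ∈ Finset.Ico (m k) (m (k+1)), a q i * b i = 0 := by
        intro i hi
        obtain ⟨hi1, hi2⟩ := Finset.mem_Ico.1 hi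
        rw [hbval k i hi1 hi2, if_neg hodd, mul_zero]
      rw [happb, Finset.sum_eq_zero hbzero, add_zero]
      have hh := (abs_lt.1 (lt_of_le_of_lt hhead1 hheadsmall)).2
      linarith
  have hsub : StrictMono (fun k => nk (k+1)) := fun _ _ h => hmono (Nat.succ_lt_succ h)
  have hlim : Tendsto (fun k => y (nk (k+1)) bL) atTop (𝓝 (φ bL)) :=
    (hyw bL).comp hsub.tendsto_atTop
  have hoddm : StrictMono (fun l : ℕ => 2*l+1) := fun aa bb h => by dsimp only; omega
  have hevenm : StrictMono (fun l : ℕ => 2*l) := fun aa bb h => by dsimp only; omega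
  have hge : 5/8 ≤ φ bL := by
    refine ge_of_tendsto' (hlim.comp hoddm.tendsto_atTop) (fun l => ?_)
    exact (hesti (2*l+1)).1 ⟨l+1, by ring⟩
  have hle : φ bL ≤ 1/8 := by
    refine le_of_tendsto' (hlim.comp hevenm.tendsto_atTop) (fun l => ?_)
    refine le_of_lt ((hesti (2*l)).2 ?_)
    rintro ⟨r, hr⟩
    omega
  linarith

end Aux

/-- Goldstine: the weak-star closure of `⋃ C_k` is the dual unit ball, yet by
Odell–Rosenthal the sequential weak-star upper limit is strictly smaller. -/
theorem stmt14 :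
    wstarClosure (⋃ k, Cball k) = {φ : Linf →L[ℝ] ℝ | ‖φ‖ ≤ 1} ∧
    LsWstar Cball ⊂ {φ : Linf →L[ℝ] ℝ | ‖φ‖ ≤ 1} := by
  have hsub : LsWstar Cball ⊆ {φ : Linf →L[ℝ] ℝ | ‖φ‖ ≤ 1} := by
    rintro φ ⟨j, hj, y, hyC, hyw⟩
    refine ContinuousLinearMap.opNorm_le_bound φ zero_le_one fun b => ?_
    rw [Real.norm_eq_abs, one_mul]
    exact le_of_tendsto' (hyw b).abs fun n => Cball_apply_le (hyC n) b
  constructor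
  · ext φ
    simp only [Set.mem_setOf_eq]
    constructor
    · intro hφ
      refine ContinuousLinearMap.opNorm_le_bound φ zero_le_one fun b => ?_
      rw [Real.norm_eq_abs, one_mul]
      refine le_of_forall_pos_le_add fun ε hε => ?_
      obtain ⟨ψ, hψ, hnear⟩ := hφ {b} ε hε
      obtain ⟨k, hk⟩ := Set.mem_iUnion.1 hψ
      have h2 := Cball_apply_le hk b
      have h3 := hnear b (Finset.mem_singleton_self b)
      have h4 : |φ b| ≤ |ψ b| + |φ b - ψ b| := by
        have h5 : φ b = ψ b + (φ b - ψ b) := by ring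
        calc |φ b| = |ψ b + (φ b - ψ b)| := by rw [← h5]
          _ ≤ |ψ b| + |φ b - ψ b| := abs_add_le _ _
      linarith
    · intro hφ F ε hε
      exact goldstine φ hφ convex_iUnion_Cball F ε hε
  · rw [Set.ssubset_iff_of_subset hsub]
    obtain ⟨φ, hn, h1, h0⟩ := exists_phi
    exact ⟨φ, hn, phi_not_mem φ h1 h0⟩
end
end

section
/- Let $X$ be a Banach space, let $(C_n)$ be a nondecreasing sequence of uniformly bounded weak-star closed convex subsets of $X^*$, and set $C := \mathrm{cl}^{w^*}(\bigcup_n C_n)$. Define $f_n := \sigma_{C_n}$ and $f := \sigma_C$ (support functions, viewed as functions on $X$). Then: (i) $f = \Gamma\text{-}\liminf_n f_n$ in the norm topology; (ii) $f_n^* = \delta_{C_n}$ and $f^* = \delta_C$; (iii) for every $x^* \in C \setminus \mathrm{Ls}_{w^*} C_n$, one has $f^*(x^*) = 0$ but $\Gamma(w^*)\text{-}\limsup_n f_n^*(x^*) = +\infty$. -/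
open Filter Topology

noncomputable section

variable {X : Type*} [NormedAddCommGroup X] [NormedSpace ℝ X]

attribute [local instance] Classical.propDecidable

/-- Support function (on `X`) of a set of functionals. -/
def suppD {X : Type*} [NormedAddCommGroup X] [NormedSpace ℝ X]
    (D : Set (X →L[ℝ] ℝ)) (x : X) : EReal :=
  ⨆ p ∈ D, ((p x : ℝ) : EReal)

/-!
A point `p` outside a weak-star closed convex set `D` is separated from it by some `x ∈ X`:
the weak-star neighbourhood of `p` missing `D` only involves finitely many points of `X`, so
evaluation at them reduces the question to Hahn–Banach in a finite-dimensional space, where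
every functional is evaluation at a point of `X`. This gives `σ_D^* = δ_D`. A sequence
`u n ⇀* p` with `p ∉ Ls C_n` must leave `C_n` infinitely often, where `σ_{C_n}^* (u n) = +∞`.
For the Γ-liminf, `σ_C` only depends on `⋃ C_n`, and each `q ∈ C_m` gives
`q x = lim q (u n) ≤ liminf σ_{C_n} (u n)` since the `C_n` increase.
-/

lemma subset_wstarClosure (S : Set (X →L[ℝ] ℝ)) : S ⊆ wstarClosure S :=
  fun φ hφ _ ε hε => ⟨φ, hφ, fun b _ => by simpa using hε⟩

lemma wstarClosure_wstarClosure (S : Set (X →L[ℝ] ℝ)) :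
    wstarClosure (wstarClosure S) = wstarClosure S := by
  refine Set.Subset.antisymm ?_ (subset_wstarClosure _)
  intro φ hφ F ε hε
  obtain ⟨ψ, hψ, hφψ⟩ := hφ F (ε / 2) (by linarith)
  obtain ⟨χ, hχ, hψχ⟩ := hψ F (ε / 2) (by linarith)
  refine ⟨χ, hχ, fun b hb => ?_⟩
  calc |φ b - χ b| ≤ |φ b - ψ b| + |ψ b - χ b| := abs_sub_le _ _ _
    _ < ε / 2 + ε / 2 := add_lt_add (hφψ b hb) (hψχ b hb)
    _ = ε := add_halves ε

lemma Convex.wstarClosure {S : Set (X →L[ℝ] ℝ)} (hS : Convex ℝ S) :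
    Convex ℝ (wstarClosure S) := by
  intro φ₁ h₁ φ₂ h₂ a b ha hb hab F ε hε
  obtain ⟨ψ₁, hψ₁, hc₁⟩ := h₁ F ε hε
  obtain ⟨ψ₂, hψ₂, hc₂⟩ := h₂ F ε hε
  refine ⟨a • ψ₁ + b • ψ₂, hS hψ₁ hψ₂ ha hb hab, fun x hx => ?_⟩
  have hsplit : (a • φ₁ + b • φ₂) x - (a • ψ₁ + b • ψ₂) x
      = a * (φ₁ x - ψ₁ x) + b * (φ₂ x - ψ₂ x) := by
    simp only [_root_.add_apply, _root_.smul_apply, smul_eq_mul]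
    ring
  rw [hsplit]
  set m := max |φ₁ x - ψ₁ x| |φ₂ x - ψ₂ x|
  calc |a * (φ₁ x - ψ₁ x) + b * (φ₂ x - ψ₂ x)|
      ≤ a * |φ₁ x - ψ₁ x| + b * |φ₂ x - ψ₂ x| := by
        simpa only [abs_mul, abs_of_nonneg ha, abs_of_nonneg hb] using
          abs_add_le (a * (φ₁ x - ψ₁ x)) (b * (φ₂ x - ψ₂ x))
    _ ≤ a * m + b * m := by gcongr <;> simp only [m, le_max_left, le_max_right]
    _ = m := by rw [← add_mul, hab, one_mul]
    _ < ε := max_lt (hc₁ x hx) (hc₂ x hx)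

def evalFinset (F : Finset X) : (X →L[ℝ] ℝ) →ₗ[ℝ] (F → ℝ) where
  toFun ψ b := ψ b
  map_add' _ _ := rfl
  map_smul' _ _ := rfl

lemma exists_apply_eq_comp_evalFinset (F : Finset X) (f : (F → ℝ) →ₗ[ℝ] ℝ) :
    ∃ x₀ : X, ∀ ψ : X →L[ℝ] ℝ, ψ x₀ = f (evalFinset F ψ) := by
  refine ⟨∑ b : F, f (fun j => if b = j then 1 else 0) • (b : X), fun ψ => ?_⟩
  rw [LinearMap.pi_apply_eq_sum_univ f, map_sum]
  refine Finset.sum_congr rfl fun b _ => ?_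
  simp only [map_smul, smul_eq_mul, evalFinset, LinearMap.coe_mk, AddHom.coe_mk]
  ring

lemma exists_evalFinset_notMem_closure {D : Set (X →L[ℝ] ℝ)} {p : X →L[ℝ] ℝ}
    (hp : p ∉ wstarClosure D) :
    ∃ F : Finset X, evalFinset F p ∉ closure (evalFinset F '' D) := by
  simp only [wstarClosure, Set.mem_ofPred_eq, not_forall, not_exists, not_and] at hp
  obtain ⟨F, ε, hε, hsep⟩ := hp
  refine ⟨F, fun hmem => ?_⟩
  obtain ⟨_, ⟨ψ, hψ, rfl⟩, hdist⟩ := Metric.mem_closure_iff.mp hmem ε hε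
  obtain ⟨b, hb, hεb⟩ := hsep ψ hψ
  have hcoord : dist (p b) (ψ b) ≤ dist (evalFinset F p) (evalFinset F ψ) :=
    dist_le_pi_dist (evalFinset F p) (evalFinset F ψ) ⟨b, hb⟩
  rw [Real.dist_eq] at hcoord
  linarith [not_lt.mp hεb]

lemma exists_lt_apply_of_notMem_wstarClosure {D : Set (X →L[ℝ] ℝ)} (hD : Convex ℝ D)
    {p : X →L[ℝ] ℝ} (hp : p ∉ wstarClosure D) :
    ∃ (x : X) (c : ℝ), (∀ ψ ∈ D, ψ x ≤ c) ∧ c < p x := by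
  obtain ⟨F, hF⟩ := exists_evalFinset_notMem_closure hp
  obtain ⟨f, c, hfD, hfp⟩ := geometric_hahn_banach_closed_point
    (hD.linear_image (evalFinset F)).closure isClosed_closure hF
  obtain ⟨x, hx⟩ := exists_apply_eq_comp_evalFinset F f.toLinearMap
  refine ⟨x, c, fun ψ hψ => ?_, by rw [hx]; exact hfp⟩
  rw [hx]
  exact (hfD _ (subset_closure (Set.mem_image_of_mem _ hψ))).le

lemma apply_le_suppD {D : Set (X →L[ℝ] ℝ)} {p : X →L[ℝ] ℝ} (hp : p ∈ D) (x : X) :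
    ((p x : ℝ) : EReal) ≤ suppD D x :=
  le_iSup₂ (f := fun q (_ : q ∈ D) => ((q x : ℝ) : EReal)) p hp

lemma suppD_mono {D E : Set (X →L[ℝ] ℝ)} (h : D ⊆ E) (x : X) : suppD D x ≤ suppD E x :=
  iSup₂_le fun _ hq => apply_le_suppD (h hq) x

lemma apply_le_suppD_of_mem_wstarClosure {D : Set (X →L[ℝ] ℝ)} {p : X →L[ℝ] ℝ}
    (hp : p ∈ wstarClosure D) (x : X) : ((p x : ℝ) : EReal) ≤ suppD D x := by
  by_contra! hlt
  obtain ⟨c, hc, hcp⟩ := EReal.lt_iff_exists_real_btwn.mp hlt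
  obtain ⟨ψ, hψ, hclose⟩ := hp {x} (p x - c) (sub_pos.mpr (EReal.coe_lt_coe_iff.mp hcp))
  have hψx : c < ψ x := by linarith [(abs_lt.mp (hclose x (Finset.mem_singleton_self x))).2]
  exact ((apply_le_suppD hψ x).trans_lt hc).not_gt (EReal.coe_lt_coe_iff.mpr hψx)

lemma suppD_wstarClosure (D : Set (X →L[ℝ] ℝ)) (x : X) :
    suppD (wstarClosure D) x = suppD D x :=
  le_antisymm (iSup₂_le fun _ hp => apply_le_suppD_of_mem_wstarClosure hp x)
    (suppD_mono (subset_wstarClosure D) x)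

lemma fconj_suppD_of_mem {D : Set (X →L[ℝ] ℝ)} {p : X →L[ℝ] ℝ} (hp : p ∈ D) :
    fconj (suppD D) p = 0 := by
  refine le_antisymm (iSup_le fun x => ?_) ?_
  · calc ((p x : ℝ) : EReal) - suppD D x ≤ ((p x : ℝ) : EReal) - ((p x : ℝ) : EReal) :=
          EReal.sub_le_sub le_rfl (apply_le_suppD hp x)
      _ = 0 := by rw [← EReal.coe_sub, sub_self, EReal.coe_zero]
  · have hzero : suppD D 0 = 0 :=
      le_antisymm (iSup₂_le fun q _ => by simp) (by simpa using apply_le_suppD hp 0)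
    calc (0 : EReal) = ((p 0 : ℝ) : EReal) - suppD D 0 := by simp [hzero]
      _ ≤ fconj (suppD D) p := le_iSup (fun x => ((p x : ℝ) : EReal) - suppD D x) 0

/-- If `x` separates `p` from `D`, then `p (n • x) - σ_D (n • x) ≥ n (p x - c)` is unbounded. -/
lemma fconj_suppD_of_notMem {D : Set (X →L[ℝ] ℝ)} (hD : Convex ℝ D)
    (hcl : wstarClosure D = D) {p : X →L[ℝ] ℝ} (hp : p ∉ D) :
    fconj (suppD D) p = ⊤ := by
  rw [← hcl] at hp
  obtain ⟨x, c, hle, hgt⟩ := exists_lt_apply_of_notMem_wstarClosure hD hp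
  rw [EReal.eq_top_iff_forall_lt]
  intro r
  obtain ⟨n, hn⟩ := exists_nat_gt (r / (p x - c))
  have hr : r < n * (p x - c) := (div_lt_iff₀ (sub_pos.mpr hgt)).mp hn
  have hsupp : suppD D ((n : ℝ) • x) ≤ ((n * c : ℝ) : EReal) := iSup₂_le fun q hq => by
    rw [map_smul, smul_eq_mul, EReal.coe_le_coe_iff]
    exact mul_le_mul_of_nonneg_left (hle q hq) n.cast_nonneg
  calc (r : EReal) < ((n * p x - n * c : ℝ) : EReal) := by
        rw [EReal.coe_lt_coe_iff]; linarith
    _ ≤ ((p ((n : ℝ) • x) : ℝ) : EReal) - suppD D ((n : ℝ) • x) := by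
        rw [EReal.coe_sub, map_smul, smul_eq_mul]
        exact EReal.sub_le_sub le_rfl hsupp
    _ ≤ fconj (suppD D) p := le_iSup (fun y => ((p y : ℝ) : EReal) - suppD D y) _

lemma fconj_suppD {D : Set (X →L[ℝ] ℝ)} (hD : Convex ℝ D) (hcl : wstarClosure D = D)
    (p : X →L[ℝ] ℝ) : fconj (suppD D) p = if p ∈ D then (0 : EReal) else ⊤ := by
  split_ifs with hp
  · exact fconj_suppD_of_mem hp
  · exact fconj_suppD_of_notMem hD hcl hp

lemma suppD_iUnion_le_liminf {C : ℕ → Set (X →L[ℝ] ℝ)} (hC : Monotone C) {u : ℕ → X} {x : X}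
    (hu : Tendsto u atTop (𝓝 x)) :
    suppD (⋃ n, C n) x ≤ liminf (fun n => suppD (C n) (u n)) atTop := by
  refine iSup₂_le fun q hq => ?_
  obtain ⟨m, hm⟩ := Set.mem_iUnion.mp hq
  have hqu : Tendsto (fun n => ((q (u n) : ℝ) : EReal)) atTop (𝓝 ((q x : ℝ) : EReal)) :=
    EReal.tendsto_coe.mpr ((q.continuous.tendsto x).comp hu)
  rw [← hqu.liminf_eq]
  refine liminf_le_liminf ?_
  filter_upwards [eventually_ge_atTop m] with n hn
  exact apply_le_suppD (hC hn hm) (u n)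

lemma gLiminf_suppD {C : ℕ → Set (X →L[ℝ] ℝ)} (hC : Monotone C) (x : X) :
    gLiminf (fun n => suppD (C n)) x = suppD (wstarClosure (⋃ n, C n)) x := by
  rw [suppD_wstarClosure]
  refine le_antisymm ((iInf₂_le (fun _ => x) tendsto_const_nhds).trans ?_)
    (le_iInf₂ fun u hu => suppD_iUnion_le_liminf hC hu)
  calc liminf (fun n => suppD (C n) x) atTop ≤ liminf (fun _ => suppD (⋃ n, C n) x) atTop :=
        liminf_le_liminf (Eventually.of_forall fun n => suppD_mono (Set.subset_iUnion C n) x)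
    _ = suppD (⋃ n, C n) x := liminf_const _

lemma frequently_notMem_of_notMem_LsWstar {C : ℕ → Set (X →L[ℝ] ℝ)}
    {u : ℕ → X →L[ℝ] ℝ} {p : X →L[ℝ] ℝ} (hp : p ∉ LsWstar C) (hu : WStarTendsto u p) :
    ∃ᶠ n in atTop, u n ∉ C n := by
  intro hev
  obtain ⟨N, hN⟩ := eventually_atTop.mp (hev.mono fun _ => not_not.mp)
  exact hp ⟨(· + N), strictMono_id.add_const N, fun n => u (n + N),
    fun n => hN (n + N) (Nat.le_add_left N n),
    fun y => (hu y).comp (tendsto_add_atTop_nat N)⟩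

lemma gLimsupW_eq_top_of_notMem_LsWstar {C : ℕ → Set (X →L[ℝ] ℝ)}
    {g : ℕ → (X →L[ℝ] ℝ) → EReal} (hg : ∀ n q, q ∉ C n → g n q = ⊤)
    {p : X →L[ℝ] ℝ} (hp : p ∉ LsWstar C) : gLimsupW g p = ⊤ :=
  top_le_iff.mp <| le_iInf₂ fun _ hu => le_limsup_of_frequently_le
    ((frequently_notMem_of_notMem_LsWstar hp hu).mono fun n hn => (hg n _ hn).ge)

theorem stmt16_general {X : Type*} [NormedAddCommGroup X] [NormedSpace ℝ X]
    (C : ℕ → Set (X →L[ℝ] ℝ)) (hmono : Monotone C)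
    (hclosed : ∀ n, wstarClosure (C n) = C n)
    (hconv : ∀ n, Convex ℝ (C n)) :
    (∀ x : X, gLiminf (fun n => suppD (C n)) x =
        suppD (wstarClosure (⋃ n, C n)) x) ∧
    (∀ (n : ℕ) (p : X →L[ℝ] ℝ),
        fconj (suppD (C n)) p = if p ∈ C n then (0 : EReal) else ⊤) ∧
    (∀ p : X →L[ℝ] ℝ,
        fconj (suppD (wstarClosure (⋃ n, C n))) p =
          if p ∈ wstarClosure (⋃ n, C n) then (0 : EReal) else ⊤) ∧
    (∀ p : X →L[ℝ] ℝ, p ∈ wstarClosure (⋃ n, C n) → p ∉ LsWstar C →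
        fconj (suppD (wstarClosure (⋃ n, C n))) p = 0 ∧
        gLimsupW (fun n => fconj (suppD (C n))) p = ⊤) := by
  have hconvD : Convex ℝ (wstarClosure (⋃ n, C n)) :=
    (hmono.directed_le.convex_iUnion hconv).wstarClosure
  have hclosedD := wstarClosure_wstarClosure (⋃ n, C n)
  refine ⟨gLiminf_suppD hmono, fun n => fconj_suppD (hconv n) (hclosed n),
    fconj_suppD hconvD hclosedD, fun p hp hLs => ⟨fconj_suppD_of_mem hp, ?_⟩⟩
  exact gLimsupW_eq_top_of_notMem_LsWstar
    (fun n _ hq => fconj_suppD_of_notMem (hconv n) (hclosed n) hq) hLs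

/-- Counterexample outside the WCG setting: support functions of a nondecreasing,
uniformly bounded sequence of weak-star closed convex sets. -/
theorem stmt16 {X : Type*} [NormedAddCommGroup X] [NormedSpace ℝ X] [CompleteSpace X]
    (C : ℕ → Set (X →L[ℝ] ℝ)) (hmono : Monotone C)
    (hclosed : ∀ n, wstarClosure (C n) = C n)
    (hconv : ∀ n, Convex ℝ (C n))
    (M : ℝ) (hbdd : ∀ n, ∀ p ∈ C n, ‖p‖ ≤ M) :
    (∀ x : X, gLiminf (fun n => suppD (C n)) x =
        suppD (wstarClosure (⋃ n, C n)) x) ∧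
    (∀ (n : ℕ) (p : X →L[ℝ] ℝ),
        fconj (suppD (C n)) p = if p ∈ C n then (0 : EReal) else ⊤) ∧
    (∀ p : X →L[ℝ] ℝ,
        fconj (suppD (wstarClosure (⋃ n, C n))) p =
          if p ∈ wstarClosure (⋃ n, C n) then (0 : EReal) else ⊤) ∧
    (∀ p : X →L[ℝ] ℝ, p ∈ wstarClosure (⋃ n, C n) → p ∉ LsWstar C →
        fconj (suppD (wstarClosure (⋃ n, C n))) p = 0 ∧
        gLimsupW (fun n => fconj (suppD (C n))) p = ⊤) :=
  stmt16_general C hmono hclosed hconv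
end
end
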